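/- Let V = {(x,y) : -1/4 < x < 1/4, 2|x| < y < 1/2} and define the covariance C_V(x,x') = λ(V ∩ (V + (x'-x))) with λ the hyperbolic area measure. Then for 0 < |x - x'| ≤ 1/2, C_V(x,x') = log(1/(2|x-x'|)) + 2|x-x'| - 1. -/

import Mathlib

open Real MeasureTheory

/-- The hyperbolic area measure `dx dy / y²`. -/
noncomputable def hypMeasure : Measure (ℝ × ℝ) :=
  volume.withDensity (fun p => ENNReal.ofReal (1 / p.2 ^ 2))

/-- The triangular region `V`. -/
def triangleV : Set (ℝ × ℝ) :=
  {p | -(1/4) < p.1 ∧ p.1 < 1/4 ∧ 2 * |p.1| < p.2 ∧ p.2 < 1/2}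

/-- Horizontal translate of a planar set. -/
def htrans (A : Set (ℝ × ℝ)) (t : ℝ) : Set (ℝ × ℝ) := {p | (p.1 - t, p.2) ∈ A}

/-! The density `1 / y ^ 2` depends only on the height, so the hyperbolic area is computed by
horizontal slices. At height `y < 1/2` the slice of `V ∩ (V + t)` is
`(-y/2, y/2) ∩ (t - y/2, t + y/2)`, whose length is the positive part of `y - |t|`; the area is
therefore `∫_{|t|}^{1/2} (y - |t|) / y² dy`, and `log y + |t| / y` is a primitive. -/

open Set

lemma hypMeasure_eq_prod :
    hypMeasure = volume.prod (volume.withDensity fun y => ENNReal.ofReal (1 / y ^ 2)) := by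
  rw [prod_withDensity_right (by fun_prop), ← Measure.volume_eq_prod]
  rfl

lemma hypMeasure_apply {S : Set (ℝ × ℝ)} (hS : MeasurableSet S) :
    hypMeasure S = ∫⁻ y, ENNReal.ofReal (1 / y ^ 2) * volume ((·, y) ⁻¹' S) := by
  rw [hypMeasure_eq_prod, Measure.prod_apply_symm hS,
    lintegral_withDensity_eq_lintegral_mul _ (by fun_prop) (measurable_measure_prodMk_right hS)]
  rfl

lemma MeasurableSet.htrans {A : Set (ℝ × ℝ)} (hA : MeasurableSet A) (t : ℝ) :
    MeasurableSet (htrans A t) :=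
  (by fun_prop : Measurable fun p : ℝ × ℝ => (p.1 - t, p.2)) hA

lemma isOpen_triangleV : IsOpen triangleV := by
  unfold triangleV
  simp only [ofPred_and]
  refine .inter ?_ (.inter ?_ (.inter ?_ ?_)) <;> exact isOpen_lt (by fun_prop) (by fun_prop)

lemma volume_Ioo_max_min (t y : ℝ) :
    volume (Ioo (max (-(y / 2)) (t - y / 2)) (min (y / 2) (t + y / 2))) = .ofReal (y - |t|) := by
  rw [Real.volume_Ioo]
  congr 1
  rcases le_total 0 t with h | h
  · rw [abs_of_nonneg h, min_eq_left (by linarith), max_eq_right (by linarith)]; ring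
  · rw [abs_of_nonpos h, min_eq_right (by linarith), max_eq_left (by linarith)]; ring

lemma preimage_triangleV_inter_htrans {t y : ℝ} (hy : y < 1 / 2) :
    (·, y) ⁻¹' (triangleV ∩ htrans triangleV t)
      = Ioo (max (-(y / 2)) (t - y / 2)) (min (y / 2) (t + y / 2)) := by
  ext a
  simp only [triangleV, htrans, mem_preimage, mem_inter_iff, mem_ofPred_eq, mem_Ioo, max_lt_iff,
    lt_min_iff, ← lt_div_iff₀' (two_pos : (0 : ℝ) < 2), abs_lt]
  constructor
  · rintro ⟨⟨-, -, ⟨h1, h2⟩, -⟩, -, -, ⟨h3, h4⟩, -⟩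
    exact ⟨⟨by linarith, by linarith⟩, by linarith, by linarith⟩
  · rintro ⟨⟨h1, h2⟩, h3, h4⟩
    refine ⟨⟨?_, ?_, ⟨?_, ?_⟩, hy⟩, ?_, ?_, ⟨?_, ?_⟩, hy⟩ <;> linarith

lemma volume_preimage_triangleV_inter_htrans (t y : ℝ) :
    volume ((·, y) ⁻¹' (triangleV ∩ htrans triangleV t))
      = (Ioo |t| (1 / 2)).indicator (fun y => .ofReal (y - |t|)) y := by
  rcases lt_or_ge y (1 / 2) with hy | hy
  · rw [preimage_triangleV_inter_htrans hy, volume_Ioo_max_min]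
    by_cases ht : |t| < y
    · rw [indicator_of_mem (show y ∈ Ioo _ _ from ⟨ht, hy⟩)]
    · rw [indicator_of_notMem (fun h => ht h.1), ENNReal.ofReal_eq_zero.mpr (by linarith)]
  · have hempty : (·, y) ⁻¹' (triangleV ∩ htrans triangleV t) = ∅ :=
      eq_empty_of_forall_notMem fun _ ha => ha.1.2.2.2.not_ge hy
    rw [hempty, measure_empty, indicator_of_notMem fun h => h.2.not_ge hy]

lemma integral_sub_div_sq {s b : ℝ} (hs : 0 < s) (hsb : s ≤ b) :
    ∫ y in s..b, (y - s) / y ^ 2 = log (b / s) + s / b - 1 := by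
  have hpos : ∀ y ∈ uIcc s b, 0 < y := fun y hy => hs.trans_le (uIcc_of_le hsb ▸ hy).1
  have hderiv :
      ∀ y ∈ uIcc s b, HasDerivAt (fun y => log y + s * y⁻¹) ((y - s) / y ^ 2) y := by
    intro y hy
    have hy0 := (hpos y hy).ne'
    refine ((hasDerivAt_log hy0).add ((hasDerivAt_inv hy0).const_mul s)).congr_deriv ?_
    field_simp
    ring
  have hcont : ContinuousOn (fun y => (y - s) / y ^ 2) (uIcc s b) :=
    .div (by fun_prop) (by fun_prop) fun y hy => (pow_pos (hpos y hy) 2).ne'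
  rw [intervalIntegral.integral_eq_sub_of_hasDerivAt hderiv hcont.intervalIntegrable,
    log_div (hs.trans_le hsb).ne' hs.ne', mul_inv_cancel₀ hs.ne']
  ring

lemma lintegral_Ioo_ofReal_sub_div_sq {s b : ℝ} (hs : 0 < s) (hsb : s ≤ b) :
    ∫⁻ y in Ioo s b, .ofReal ((y - s) / y ^ 2) = .ofReal (log (b / s) + s / b - 1) := by
  have hcont : ContinuousOn (fun y => (y - s) / y ^ 2) (Icc s b) :=
    .div (by fun_prop) (by fun_prop) fun y hy => (pow_pos (hs.trans_le hy.1) 2).ne'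
  have hnonneg : 0 ≤ᵐ[volume.restrict (Ioo s b)] fun y => (y - s) / y ^ 2 :=
    ae_restrict_of_forall_mem measurableSet_Ioo fun y hy =>
      div_nonneg (sub_nonneg.mpr hy.1.le) (sq_nonneg y)
  rw [← ofReal_integral_eq_lintegral_ofReal (hcont.integrableOn_Icc.mono_set Ioo_subset_Icc_self)
    hnonneg, ← integral_Ioc_eq_integral_Ioo, ← intervalIntegral.integral_of_le hsb,
    integral_sub_div_sq hs hsb]

lemma hypMeasure_triangleV_inter_htrans (t : ℝ) :
    hypMeasure (triangleV ∩ htrans triangleV t)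
      = ∫⁻ y in Ioo |t| (1 / 2), .ofReal ((y - |t|) / y ^ 2) := by
  have hV := isOpen_triangleV.measurableSet
  rw [hypMeasure_apply (hV.inter (hV.htrans t)), ← lintegral_indicator measurableSet_Ioo]
  refine lintegral_congr fun y => ?_
  rw [volume_preimage_triangleV_inter_htrans,
    ← indicator_mul_right _ fun y => ENNReal.ofReal (1 / y ^ 2)]
  congr 1 with z
  rw [← ENNReal.ofReal_mul (one_div_nonneg.mpr (sq_nonneg z)), one_div_mul_eq_div]

/-- For `0 < |x - x'| ≤ 1/2`,
`λ(V ∩ (V + (x'-x))) = log (1/(2|x-x'|)) + 2|x-x'| - 1`. -/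
theorem hyp_area_triangle_covariance (x x' : ℝ) (h0 : 0 < |x - x'|) (h1 : |x - x'| ≤ 1/2) :
    hypMeasure (triangleV ∩ htrans triangleV (x' - x))
      = ENNReal.ofReal (Real.log (1 / (2 * |x - x'|)) + 2 * |x - x'| - 1) := by
  rw [hypMeasure_triangleV_inter_htrans, abs_sub_comm, lintegral_Ioo_ofReal_sub_div_sq h0 h1,
    div_div, div_div_eq_mul_div, div_one, mul_comm _ (2 : ℝ)]
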